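/- For positive integers q and n, let B_q(n) denote the number of integers a with 1 ≤ a ≤ n² and a² ≡ 4q (mod n²). There is a constant K such that for every positive integer q, the sum over all positive integers d coprime to q satisfies ∑_{d ≥ 1, gcd(d,q) = 1} ψ(d) · B_q(d) / d³ ≤ K; in particular this series converges. -/

import Mathlib

/-!
Fix a solution `a` of `x² ≡ 4q (mod d²)`. Modulo each prime power `p^k ∥ d²` (with `p ∤ q`) any
other solution `x` satisfies `4x ≡ 4a` or `4x ≡ -4a`: for odd `p` because `p` cannot divide both
`x - a` and `x + a`, for `p = 2` because `8` cannot, the factor `4` absorbing the extra square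
roots modulo powers of `2`. So `4x mod d²` is determined by a choice of sign at each prime, and
`B_q(d) ≤ 5 · 2^ω(d)`. Together with `ψ(d) ≤ d · 2^ω(d)` the `d`-th term is at most
`5 · 4^ω(d) / d²`, and `16^ω(d) ≤ 16^16 · d` bounds this by a multiple of `d^(-3/2)`,
uniformly in `q`.
-/

open scoped BigOperators

/-- The Dedekind psi function: `ψ(n) = n · ∏_{p prime, p ∣ n} (1 + 1/p)`. -/
noncomputable def dedekindPsi (n : ℕ) : ℝ :=
  n * ∏ p ∈ n.primeFactors, (1 + 1 / (p : ℝ))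

/-- `B_q(n)` is the number of integers `a` with `1 ≤ a ≤ n²` and `a² ≡ 4q (mod n²)`. -/
def Bfun (q n : ℕ) : ℕ :=
  ((Finset.Icc 1 (n ^ 2)).filter (fun a => a ^ 2 % n ^ 2 = (4 * q) % n ^ 2)).card

theorem Prime.pow_dvd_mul_pow_of_pow_dvd_mul {M : Type*} [CommMonoidWithZero M]
    [IsCancelMulZero M] [WfDvdMonoid M] {p a b : M} (hp : Prime p) {k j : ℕ}
    (h : p ^ k ∣ a * b) (hb : ¬p ^ (j + 1) ∣ b) : p ^ k ∣ a * p ^ j := by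
  have hb0 : b ≠ 0 := by rintro rfl; exact hb (dvd_zero _)
  obtain ⟨i, u, hpu, rfl⟩ := WfDvdMonoid.max_power_factor hb0 hp.irreducible
  have hij : i ≤ j := by
    by_contra! hji
    exact hb (dvd_mul_of_dvd_left (pow_dvd_pow p hji) u)
  have : p ^ k ∣ a * p ^ i := hp.pow_dvd_of_dvd_mul_right k hpu (by rwa [mul_assoc])
  exact this.trans (mul_dvd_mul_left a (pow_dvd_pow p hij))

theorem dvd_sub_mul_add_of_dvd_sq_sub {n c a b : ℤ} (ha : n ∣ a ^ 2 - c)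
    (hb : n ∣ b ^ 2 - c) : n ∣ (a - b) * (a + b) := by
  have := dvd_sub ha hb
  rwa [show a ^ 2 - c - (b ^ 2 - c) = (a - b) * (a + b) by ring] at this

theorem Prime.pow_dvd_sub_or_add_of_sq_sub_dvd {p c a b : ℤ} {k : ℕ} (hp : Prime p)
    (hp2 : ¬p ∣ 2) (hc : ¬p ∣ c) (ha : p ^ k ∣ a ^ 2 - c) (hb : p ^ k ∣ b ^ 2 - c) :
    p ^ k ∣ a - b ∨ p ^ k ∣ a + b := by
  rcases Nat.eq_zero_or_pos k with rfl | hk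
  · simp
  have hprod := dvd_sub_mul_add_of_dvd_sq_sub ha hb
  have hnot : ¬(p ∣ a - b ∧ p ∣ a + b) := by
    rintro ⟨hsub, hadd⟩
    have h2a : p ∣ 2 * a := by
      have := dvd_add hsub hadd
      rwa [show a - b + (a + b) = 2 * a by ring] at this
    have hpa : p ∣ a := (hp.dvd_or_dvd h2a).resolve_left hp2
    have hpk : p ∣ a ^ 2 - c := (dvd_pow_self p hk.ne').trans ha
    exact hc (by simpa using dvd_sub (dvd_pow hpa two_ne_zero) hpk)
  rcases not_and_or.mp hnot with hsub | hadd
  · exact .inr (hp.pow_dvd_of_dvd_mul_left k hsub hprod)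
  · exact .inl (hp.pow_dvd_of_dvd_mul_right k hadd hprod)

theorem two_pow_dvd_four_mul_sub_or_add {q a b : ℤ} {k : ℕ} (hq : Odd q)
    (ha : 2 ^ k ∣ a ^ 2 - 4 * q) (hb : 2 ^ k ∣ b ^ 2 - 4 * q) :
    2 ^ k ∣ 4 * (a - b) ∨ 2 ^ k ∣ 4 * (a + b) := by
  rcases le_or_gt k 2 with hk | hk
  · exact .inl (dvd_mul_of_dvd_left (pow_dvd_pow 2 hk) _)
  have hprod := dvd_sub_mul_add_of_dvd_sq_sub ha hb
  have hnot : ¬((2 : ℤ) ^ (2 + 1) ∣ a - b ∧ (2 : ℤ) ^ (2 + 1) ∣ a + b) := by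
    rintro ⟨hsub, hadd⟩
    obtain ⟨t, rfl⟩ : (4 : ℤ) ∣ a := by
      have := dvd_add hsub hadd
      norm_num at this
      omega
    have h8 : (2 : ℤ) ^ 3 ∣ (4 * t) ^ 2 - 4 * q := (pow_dvd_pow 2 hk).trans ha
    obtain ⟨r, rfl⟩ := hq
    ring_nf at h8
    omega
  rcases not_and_or.mp hnot with hsub | hadd
  · right
    rw [mul_comm] at hprod ⊢
    exact Prime.pow_dvd_mul_pow_of_pow_dvd_mul Int.prime_two hprod hsub
  · left
    rw [mul_comm]
    exact Prime.pow_dvd_mul_pow_of_pow_dvd_mul Int.prime_two hprod hadd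

theorem Nat.Prime.pow_dvd_four_mul_sub_or_add {p k : ℕ} {q a b : ℤ} (hp : p.Prime)
    (hq : ¬(p : ℤ) ∣ q) (ha : (p : ℤ) ^ k ∣ a ^ 2 - 4 * q)
    (hb : (p : ℤ) ^ k ∣ b ^ 2 - 4 * q) :
    (p : ℤ) ^ k ∣ 4 * (a - b) ∨ (p : ℤ) ^ k ∣ 4 * (a + b) := by
  rcases hp.eq_two_or_odd' with rfl | hodd
  · have hq : Odd q := Int.not_even_iff_odd.mp (by simpa [even_iff_two_dvd] using hq)
    exact two_pow_dvd_four_mul_sub_or_add hq ha hb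
  have hpZ : _root_.Prime (p : ℤ) := Nat.prime_iff_prime_int.mp hp
  have hp2 : ¬(p : ℤ) ∣ 2 := by
    rw [show (2 : ℤ) = ((2 : ℕ) : ℤ) by rfl, Int.natCast_dvd_natCast,
      Nat.prime_dvd_prime_iff_eq hp Nat.prime_two]
    rintro rfl
    exact Nat.not_even_iff_odd.mpr hodd even_two
  have h4q : ¬(p : ℤ) ∣ 4 * q := by
    rw [show (4 : ℤ) * q = 2 * (2 * q) by ring]
    exact fun h => (hpZ.dvd_or_dvd h).elim hp2 fun h => (hpZ.dvd_or_dvd h).elim hp2 hq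
  exact (hpZ.pow_dvd_sub_or_add_of_sq_sub_dvd hp2 h4q ha hb).imp
    (dvd_mul_of_dvd_right · 4) (dvd_mul_of_dvd_right · 4)

theorem Int.natCast_dvd_of_forall_ordProj_dvd {n : ℕ} {z : ℤ} (hn : n ≠ 0)
    (h : ∀ p ∈ n.primeFactors, ((p ^ n.factorization p : ℕ) : ℤ) ∣ z) :
    (n : ℤ) ∣ z := by
  rcases eq_or_ne z 0 with rfl | hz
  · exact dvd_zero _
  rw [Int.natCast_dvd, ← Nat.factorization_prime_le_iff_dvd hn (Int.natAbs_ne_zero.mpr hz)]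
  intro p hp
  by_cases hpn : p ∈ n.primeFactors
  · exact (hp.pow_dvd_iff_le_factorization (Int.natAbs_ne_zero.mpr hz)).mp
      (Int.natCast_dvd.mp (h p hpn))
  · rw [← Nat.support_factorization, Finsupp.notMem_support_iff] at hpn
    simp [hpn]

section SquareRootsModN

variable {N q : ℕ}

theorem ordProj_dvd_four_mul_sub_or_add (hq : N.Coprime q) {p x y : ℕ} (hp : p ∈ N.primeFactors)
    (hx : x ^ 2 ≡ 4 * q [MOD N]) (hy : y ^ 2 ≡ 4 * q [MOD N]) :
    ((p ^ N.factorization p : ℕ) : ℤ) ∣ 4 * ((x : ℤ) - y) ∨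
      ((p ^ N.factorization p : ℕ) : ℤ) ∣ 4 * ((x : ℤ) + y) := by
  have hp' := Nat.prime_of_mem_primeFactors hp
  have hpq : ¬(p : ℤ) ∣ q := by
    rw [Int.natCast_dvd_natCast]
    exact hp'.coprime_iff_not_dvd.mp (hq.coprime_dvd_left (Nat.dvd_of_mem_primeFactors hp))
  have hsol : ∀ {z : ℕ}, z ^ 2 ≡ 4 * q [MOD N] →
      (p : ℤ) ^ N.factorization p ∣ (z : ℤ) ^ 2 - 4 * q := fun hz => by
    have := Nat.modEq_iff_dvd.mp hz.symm
    push_cast at this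
    exact_mod_cast (Int.natCast_dvd_natCast.mpr (Nat.ordProj_dvd N p)).trans this
  push_cast
  exact hp'.pow_dvd_four_mul_sub_or_add hpq (hsol hx) (hsol hy)

/-- The primes `p ∣ N` at which `4x ≡ 4a` rather than `4x ≡ -4a` modulo `p ^ v_p(N)`. -/
def signPattern (N a x : ℕ) : Finset ℕ :=
  N.primeFactors.filter fun p => ((p ^ N.factorization p : ℕ) : ℤ) ∣ 4 * ((x : ℤ) - a)

theorem four_mul_modEq_of_signPattern_eq (hN : N ≠ 0) (hq : N.Coprime q) {a x y : ℕ}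
    (ha : a ^ 2 ≡ 4 * q [MOD N]) (hx : x ^ 2 ≡ 4 * q [MOD N]) (hy : y ^ 2 ≡ 4 * q [MOD N])
    (h : signPattern N a x = signPattern N a y) : 4 * y ≡ 4 * x [MOD N] := by
  refine Nat.modEq_iff_dvd.mpr (Int.natCast_dvd_of_forall_ordProj_dvd hN fun p hp => ?_)
  push_cast
  by_cases hpx : p ∈ signPattern N a x
  · have hpy : p ∈ signPattern N a y := h ▸ hpx
    have := dvd_sub (Finset.mem_filter.mp hpx).2 (Finset.mem_filter.mp hpy).2
    rwa [show 4 * ((x : ℤ) - a) - 4 * ((y : ℤ) - a) = 4 * x - 4 * y by ring] at this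
  · have hpy : p ∉ signPattern N a y := h ▸ hpx
    have hx' := (ordProj_dvd_four_mul_sub_or_add hq hp hx ha).resolve_left
      fun h => hpx (Finset.mem_filter.mpr ⟨hp, h⟩)
    have hy' := (ordProj_dvd_four_mul_sub_or_add hq hp hy ha).resolve_left
      fun h => hpy (Finset.mem_filter.mpr ⟨hp, h⟩)
    have := dvd_sub hx' hy'
    rwa [show 4 * ((x : ℤ) + a) - 4 * ((y : ℤ) + a) = 4 * x - 4 * y by ring] at this

theorem card_filter_sq_modEq_four_mul_le (hN : N ≠ 0) (hq : N.Coprime q) :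
    ((Finset.Icc 1 N).filter (fun x => x ^ 2 ≡ 4 * q [MOD N])).card
      ≤ 5 * 2 ^ N.primeFactors.card := by
  set S := (Finset.Icc 1 N).filter (fun x => x ^ 2 ≡ 4 * q [MOD N])
  rcases S.eq_empty_or_nonempty with hS | ⟨a, ha⟩
  · simp [hS]
  have hmaps : ∀ x ∈ S,
      (signPattern N a x, 4 * x / N) ∈ N.primeFactors.powerset ×ˢ Finset.range 5 := by
    intro x hx
    have hxN := (Finset.mem_Icc.mp (Finset.mem_filter.mp hx).1).2
    simp only [Finset.mem_product, Finset.mem_powerset, Finset.mem_range]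
    exact ⟨Finset.filter_subset _ _, Nat.div_lt_of_lt_mul (by omega)⟩
  have hinj : Set.InjOn (fun x => (signPattern N a x, 4 * x / N)) S := by
    intro x hx y hy hxy
    obtain ⟨hpat, hdiv⟩ := Prod.mk.inj hxy
    have hmod := four_mul_modEq_of_signPattern_eq hN hq (Finset.mem_filter.mp ha).2
      (Finset.mem_filter.mp hx).2 (Finset.mem_filter.mp hy).2 hpat
    have : 4 * x = 4 * y := by
      rw [← Nat.div_add_mod (4 * x) N, ← Nat.div_add_mod (4 * y) N, hdiv, hmod]
    omega
  calc S.card ≤ (N.primeFactors.powerset ×ˢ Finset.range 5).card :=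
        Finset.card_le_card_of_injOn _ (fun x hx => hmaps x hx) hinj
    _ = 5 * 2 ^ N.primeFactors.card := by
        rw [Finset.card_product, Finset.card_powerset, Finset.card_range, mul_comm]

end SquareRootsModN

theorem Bfun_le {q d : ℕ} (hd : d ≠ 0) (hq : d.Coprime q) :
    Bfun q d ≤ 5 * 2 ^ d.primeFactors.card := by
  have := card_filter_sq_modEq_four_mul_le (pow_ne_zero 2 hd) (hq.pow_left 2)
  rwa [Nat.primeFactors_pow d two_ne_zero] at this

theorem dedekindPsi_nonneg (n : ℕ) : 0 ≤ dedekindPsi n :=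
  mul_nonneg n.cast_nonneg (Finset.prod_nonneg fun _ _ => by positivity)

theorem dedekindPsi_le (n : ℕ) : dedekindPsi n ≤ n * 2 ^ n.primeFactors.card := by
  rw [dedekindPsi, ← Finset.prod_const]
  gcongr with p hp
  have : (1 : ℝ) ≤ p := by exact_mod_cast (Nat.prime_of_mem_primeFactors hp).one_le
  linarith [(div_le_one (by linarith)).mpr this]

theorem pow_card_primeFactors_le (a : ℕ) {n : ℕ} (hn : n ≠ 0) :
    a ^ n.primeFactors.card ≤ a ^ a * n := by
  rcases Nat.eq_zero_or_pos a with rfl | ha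
  · rw [pow_zero, one_mul]
    exact (pow_le_one₀ le_rfl zero_le_one).trans (Nat.one_le_iff_ne_zero.mpr hn)
  rw [← Finset.prod_const, ← Finset.prod_filter_mul_prod_filter_not n.primeFactors (· < a)]
  gcongr
  · rw [Finset.prod_const]
    refine Nat.pow_le_pow_right ha ((Finset.card_le_card ?_).trans (Finset.card_range a).le)
    intro p hp
    exact Finset.mem_range.mpr (Finset.mem_filter.mp hp).2
  · calc ∏ p ∈ n.primeFactors.filter (¬· < a), a
        ≤ ∏ p ∈ n.primeFactors.filter (¬· < a), p :=
          Finset.prod_le_prod' fun p hp => not_lt.mp (Finset.mem_filter.mp hp).2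
      _ ≤ ∏ p ∈ n.primeFactors, p :=
          Finset.prod_le_prod_of_subset_of_one_le' (Finset.filter_subset _ _)
            fun p hp _ => (Nat.prime_of_mem_primeFactors hp).one_le
      _ ≤ n := Nat.le_of_dvd (Nat.pos_of_ne_zero hn) (Nat.prod_primeFactors_dvd n)

theorem four_pow_card_primeFactors_le {n : ℕ} (hn : n ≠ 0) :
    (4 : ℝ) ^ n.primeFactors.card ≤ 4 ^ 16 * √n := by
  rw [← pow_le_pow_iff_left₀ (by positivity) (by positivity) two_ne_zero, mul_pow,
    Real.sq_sqrt n.cast_nonneg]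
  calc ((4 : ℝ) ^ n.primeFactors.card) ^ 2 = 16 ^ n.primeFactors.card := by
        rw [← pow_mul, mul_comm, pow_mul]; norm_num
    _ ≤ 16 ^ 16 * n := by exact_mod_cast pow_card_primeFactors_le 16 hn
    _ = (4 ^ 16) ^ 2 * n := by norm_num

theorem psi_mul_Bfun_div_cube_le {q d : ℕ} (hd : d ≠ 0) (hq : d.Coprime q) :
    dedekindPsi d * Bfun q d / (d : ℝ) ^ 3 ≤ 5 * 4 ^ 16 * (d : ℝ) ^ (-3 / 2 : ℝ) := by
  have hd' : (0 : ℝ) < d := by exact_mod_cast Nat.pos_of_ne_zero hd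
  have hB : (Bfun q d : ℝ) ≤ 5 * 2 ^ d.primeFactors.card := by exact_mod_cast Bfun_le hd hq
  calc dedekindPsi d * Bfun q d / (d : ℝ) ^ 3
      ≤ d * 2 ^ d.primeFactors.card * (5 * 2 ^ d.primeFactors.card) / (d : ℝ) ^ 3 := by
        gcongr
        exact dedekindPsi_le d
    _ = 5 * 4 ^ d.primeFactors.card / (d : ℝ) ^ 2 := by
        rw [show (4 : ℝ) = 2 * 2 by norm_num, mul_pow]
        field_simp
    _ ≤ 5 * (4 ^ 16 * √d) / (d : ℝ) ^ 2 := by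
        gcongr
        exact four_pow_card_primeFactors_le hd
    _ = 5 * 4 ^ 16 * (d : ℝ) ^ (-3 / 2 : ℝ) := by
        rw [show (-3 / 2 : ℝ) = 1 / 2 - 2 by norm_num, Real.rpow_sub hd', Real.rpow_two,
          Real.sqrt_eq_rpow]
        ring

theorem sum_psi_B_div_cube_le :
    ∃ K : ℝ, ∀ q : ℕ, 0 < q →
      ∃ S : ℝ, S ≤ K ∧
        HasSum (fun d : ℕ => if 0 < d ∧ Nat.Coprime d q
          then dedekindPsi d * Bfun q d / (d : ℝ) ^ 3 else 0) S := by
  set g : ℕ → ℝ := fun d => 5 * 4 ^ 16 * (d : ℝ) ^ (-3 / 2 : ℝ)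
  have hg : Summable g := (Real.summable_nat_rpow.mpr (by norm_num)).mul_left _
  refine ⟨∑' d, g d, fun q _ => ?_⟩
  set f : ℕ → ℝ := fun d => if 0 < d ∧ Nat.Coprime d q
    then dedekindPsi d * Bfun q d / (d : ℝ) ^ 3 else 0
  have hfg : ∀ d, f d ≤ g d := fun d => by
    by_cases h : 0 < d ∧ d.Coprime q
    · simp only [f, g, if_pos h]
      exact psi_mul_Bfun_div_cube_le h.1.ne' h.2
    · simp only [f, g, if_neg h]
      positivity
  have hf : Summable f := by
    refine Summable.of_nonneg_of_le (fun d => ?_) hfg hg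
    simp only [f]
    split_ifs
    · have := dedekindPsi_nonneg d
      positivity
    · rfl
  exact ⟨∑' d, f d, hf.tsum_le_tsum hfg hg, hf.hasSum⟩
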